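/- Let G be a connected graph and H a graph, and let i ≥ 2 be an integer with i ≤ diam(G) − 1. Then any i-packing of G∘H contains at most one vertex from each H-layer H^g = {g}×V(H), and consequently ρ_i(G∘H) ≤ ρ_i(G). -/

import Mathlib

open SimpleGraph

/-- The lexicographic product of simple graphs. -/
def SimpleGraph.lexProd {α β : Type*} (G : SimpleGraph α) (H : SimpleGraph β) :
    SimpleGraph (α × β) where
  Adj x y := G.Adj x.1 y.1 ∨ (x.1 = y.1 ∧ H.Adj x.2 y.2)
  symm := by
    refine ⟨?_⟩
    rintro ⟨g1, h1⟩ ⟨g2, h2⟩ (h | ⟨rfl, h⟩)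
    · exact Or.inl h.symm
    · exact Or.inr ⟨rfl, h.symm⟩
  loopless := by
    refine ⟨?_⟩
    rintro ⟨g, h⟩ (h' | ⟨-, h'⟩)
    · exact G.irrefl h'
    · exact H.irrefl h'

/-- A set of vertices is independent if its vertices are pairwise non-adjacent. -/
def SimpleGraph.IndepSet {α : Type*} (G : SimpleGraph α) (s : Set α) : Prop :=
  ∀ u ∈ s, ∀ v ∈ s, u ≠ v → ¬ G.Adj u v

/-- The independence number: the largest cardinality of an independent set. -/
noncomputable def SimpleGraph.indepNum' {α : Type*} [Fintype α] (G : SimpleGraph α) : ℕ :=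
  sSup {n | ∃ s : Finset α, G.IndepSet ↑s ∧ s.card = n}

/-- An `i`-packing: a set of vertices pairwise at distance greater than `i`. -/
def SimpleGraph.IsPacking {α : Type*} (G : SimpleGraph α) (i : ℕ) (s : Set α) : Prop :=
  ∀ u ∈ s, ∀ v ∈ s, u ≠ v → i < G.dist u v

/-- The `i`-packing number: the largest cardinality of an `i`-packing. -/
noncomputable def SimpleGraph.packingNum {α : Type*} [Fintype α] (G : SimpleGraph α)
    (i : ℕ) : ℕ :=
  sSup {n | ∃ s : Finset α, G.IsPacking i ↑s ∧ s.card = n}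

/-- A `k`-packing coloring: colors in `{1, …, k}`, and any two distinct vertices sharing
color `i` are at distance greater than `i`. -/
def SimpleGraph.IsPackingColoring {α : Type*} (G : SimpleGraph α) (k : ℕ) (c : α → ℕ) :
    Prop :=
  (∀ v, c v ∈ Finset.Icc 1 k) ∧ ∀ u v, u ≠ v → c u = c v → c u < G.dist u v

/-- The packing chromatic number: the least `k` admitting a `k`-packing coloring. -/
noncomputable def SimpleGraph.packingChromatic {α : Type*} (G : SimpleGraph α) : ℕ :=
  sInf {k | ∃ c : α → ℕ, G.IsPackingColoring k c}

/-- `d(G) = 1` if `G` is complete, and `diam(G) - 1` otherwise. -/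
noncomputable def SimpleGraph.dval {α : Type*} [Fintype α] (G : SimpleGraph α) : ℕ :=
  letI := Classical.dec (G = (⊤ : SimpleGraph α))
  if G = (⊤ : SimpleGraph α) then 1 else G.diam - 1


/-!
Two vertices `(g, h₁)`, `(g, h₂)` of one layer are joined through `(x, h₁)` for any neighbour `x`
of `g`, so they are at distance at most `2 ≤ i` and an `i`-packing meets each layer at most once.
A shortest `g₁`-`g₂` path of `G` lifts to a path of the same length between any two vertices over
`g₁ ≠ g₂` (its first edge may change the `H`-coordinate), so projecting an `i`-packing of `G ∘ H`
to `G` yields an `i`-packing of the same size. Since `diam G ≥ 3`, `G` is preconnected and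
nontrivial, hence has no isolated vertex.
-/

namespace SimpleGraph

variable {α β : Type*}

section PackingNum

variable [Fintype α] (G : SimpleGraph α) (i : ℕ)

lemma bddAbove_card_isPacking :
    BddAbove {n | ∃ s : Finset α, G.IsPacking i ↑s ∧ s.card = n} :=
  ⟨Fintype.card α, by rintro _ ⟨s, -, rfl⟩; exact s.card_le_univ⟩

variable {G i} in
lemma IsPacking.card_le_packingNum {s : Finset α} (hs : G.IsPacking i s) :
    s.card ≤ G.packingNum i :=
  le_csSup (bddAbove_card_isPacking G i) ⟨s, hs, rfl⟩

lemma exists_isPacking_card_eq_packingNum :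
    ∃ s : Finset α, G.IsPacking i s ∧ s.card = G.packingNum i := by
  refine Nat.sSup_mem ?_ (bddAbove_card_isPacking G i)
  exact ⟨0, ∅, by simp [IsPacking], rfl⟩

end PackingNum

section LexProd

variable {G : SimpleGraph α} {H : SimpleGraph β}

lemma dist_lexProd_mk_mk_le_two {g x : α} (hgx : G.Adj g x) (h₁ h₂ : β) :
    (G.lexProd H).dist (g, h₁) (g, h₂) ≤ 2 :=
  (G.lexProd H).dist_le <| .cons (Or.inl hgx : (G.lexProd H).Adj (g, h₁) (x, h₁))
    (.cons (Or.inl hgx.symm : (G.lexProd H).Adj (x, h₁) (g, h₂)) .nil)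

lemma dist_lexProd_le_dist {g₁ g₂ : α} (hne : g₁ ≠ g₂) (hr : G.Reachable g₁ g₂) (h₁ h₂ : β) :
    (G.lexProd H).dist (g₁, h₁) (g₂, h₂) ≤ G.dist g₁ g₂ := by
  obtain ⟨p, hp⟩ := hr.exists_walk_length_eq_dist
  cases p with
  | nil => exact absurd rfl hne
  | @cons _ x _ hadj q =>
    let layer : G →g G.lexProd H := ⟨fun g => (g, h₂), Or.inl⟩
    have hstep : (G.lexProd H).Adj (g₁, h₁) (x, h₂) := Or.inl hadj
    calc (G.lexProd H).dist (g₁, h₁) (g₂, h₂)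
        ≤ (q.map layer).length + 1 := (G.lexProd H).dist_le (.cons hstep (q.map layer))
      _ = G.dist g₁ g₂ := by rw [Walk.length_map, ← hp, Walk.length_cons]

variable {i : ℕ} {s : Set (α × β)}

lemma IsPacking.injOn_fst (hs : (G.lexProd H).IsPacking i s) (hi : 2 ≤ i)
    (hG : ∀ g, ∃ x, G.Adj g x) : s.InjOn Prod.fst := by
  rintro ⟨g, h₁⟩ hu ⟨g', h₂⟩ hv (rfl : g = g')
  by_contra hne
  obtain ⟨x, hgx⟩ := hG g
  have hclose := dist_lexProd_mk_mk_le_two (H := H) hgx h₁ h₂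
  have hfar := hs _ hu _ hv hne
  omega

lemma IsPacking.image_fst (hs : (G.lexProd H).IsPacking i s) (hG : G.Preconnected) :
    G.IsPacking i (Prod.fst '' s) := by
  rintro _ ⟨u, hu, rfl⟩ _ ⟨v, hv, rfl⟩ hne
  have huv : u ≠ v := fun h => hne (congrArg Prod.fst h)
  calc i < (G.lexProd H).dist u v := hs u hu v hv huv
    _ ≤ G.dist u.1 v.1 := dist_lexProd_le_dist hne (hG _ _) u.2 v.2

end LexProd

end SimpleGraph

theorem packing_layer_lexProd_general {α β : Type*} [Fintype α] [Fintype β]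
    (G : SimpleGraph α) (H : SimpleGraph β)
    (i : ℕ) (hi2 : 2 ≤ i) (hid : i ≤ G.diam - 1) :
    (∀ s : Set (α × β), (G.lexProd H).IsPacking i s →
      ∀ g : α, ({v ∈ s | v.1 = g} : Set (α × β)).Subsingleton) ∧
    (G.lexProd H).packingNum i ≤ G.packingNum i := by
  classical
  have hdiam : G.diam ≠ 0 := by omega
  have := G.nontrivial_of_diam_ne_zero hdiam
  have hG : G.Preconnected := preconnected_of_ediam_ne_top (ediam_ne_top_of_diam_ne_zero hdiam)
  have hinj : ∀ s : Set (α × β), (G.lexProd H).IsPacking i s → s.InjOn Prod.fst :=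
    fun s hs => hs.injOn_fst hi2 hG.exists_adj_of_nontrivial
  refine ⟨fun s hs g u hu v hv => hinj s hs hu.1 hv.1 (hu.2.trans hv.2.symm), ?_⟩
  obtain ⟨s, hs, hcard⟩ := (G.lexProd H).exists_isPacking_card_eq_packingNum i
  calc (G.lexProd H).packingNum i = s.card := hcard.symm
    _ = (s.image Prod.fst).card := (Finset.card_image_of_injOn (hinj _ hs)).symm
    _ ≤ G.packingNum i := IsPacking.card_le_packingNum (by simpa using hs.image_fst hG)

theorem packing_layer_lexProd {α β : Type*} [Fintype α] [Fintype β]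
    (G : SimpleGraph α) (H : SimpleGraph β) (hG : G.Connected)
    (i : ℕ) (hi2 : 2 ≤ i) (hid : i ≤ G.diam - 1) :
    (∀ s : Set (α × β), (G.lexProd H).IsPacking i s →
      ∀ g : α, ({v ∈ s | v.1 = g} : Set (α × β)).Subsingleton) ∧
    (G.lexProd H).packingNum i ≤ G.packingNum i :=
  packing_layer_lexProd_general G H i hi2 hid
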